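/- arXiv:funct-an/9609001 — 4 statements merged into one kernel-verified Lean document; each statement's English description precedes it below -/
import Mathlib

section
/- Let A be a commutative C*-algebra and M a Hilbert C*-bimodule over A. Then for all m, n, p ∈ M, ⟨m,n⟩_L · p = ⟨p,n⟩_L · m. -/
noncomputable section

/-- A (pre-)Hilbert C*-bimodule over a C*-algebra `A` (in the sense of
Brown–Mingo–Shen): an `A`-`A`-bimodule with left and right `A`-valued inner
products making it a left and right (pre-)Hilbert C*-module, subject to the
compatibility condition `⟨m,n⟩_L • p = m • ⟨n,p⟩_R`.  The module actions and
inner products are bundled as plain functions. -/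
structure CstarBimodule (A M : Type*)
    [NormedRing A] [StarRing A] [CStarRing A] [NormedAlgebra ℂ A] [StarModule ℂ A]
    [AddCommGroup M] [Module ℂ M] : Type _ where
  lsmul : A → M → M
  rsmul : M → A → M
  innerL : M → M → A
  innerR : M → M → A
  lsmul_add : ∀ a (m n : M), lsmul a (m + n) = lsmul a m + lsmul a n
  add_lsmul : ∀ a b (m : M), lsmul (a + b) m = lsmul a m + lsmul b m
  mul_lsmul : ∀ a b (m : M), lsmul (a * b) m = lsmul a (lsmul b m)
  lsmul_smulc : ∀ (c : ℂ) a (m : M), lsmul (c • a) m = c • lsmul a m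
  rsmul_add : ∀ (m n : M) a, rsmul (m + n) a = rsmul m a + rsmul n a
  add_rsmul : ∀ (m : M) a b, rsmul m (a + b) = rsmul m a + rsmul m b
  rsmul_mul : ∀ (m : M) a b, rsmul m (a * b) = rsmul (rsmul m a) b
  rsmul_smulc : ∀ (c : ℂ) (m : M) a, rsmul m (c • a) = c • rsmul m a
  lsmul_rsmul : ∀ a (m : M) b, rsmul (lsmul a m) b = lsmul a (rsmul m b)
  innerL_add_left : ∀ m n p : M, innerL (m + n) p = innerL m p + innerL n p
  innerL_smul_left : ∀ (c : ℂ) (m n : M), innerL (c • m) n = c • innerL m n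
  innerL_lsmul_left : ∀ a (m n : M), innerL (lsmul a m) n = a * innerL m n
  innerL_star : ∀ m n : M, star (innerL m n) = innerL n m
  innerL_nonneg : ∀ m : M, ∃ b, innerL m m = star b * b
  innerL_definite : ∀ m : M, innerL m m = 0 → m = 0
  innerR_add_right : ∀ m n p : M, innerR m (n + p) = innerR m n + innerR m p
  innerR_smul_right : ∀ (c : ℂ) (m n : M), innerR m (c • n) = c • innerR m n
  innerR_rsmul_right : ∀ (m n : M) a, innerR m (rsmul n a) = innerR m n * a
  innerR_star : ∀ m n : M, star (innerR m n) = innerR n m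
  innerR_nonneg : ∀ m : M, ∃ b, innerR m m = star b * b
  innerR_definite : ∀ m : M, innerR m m = 0 → m = 0
  compat : ∀ m n p : M, lsmul (innerL m n) p = rsmul m (innerR n p)

variable {A M N : Type*}
  [NormedRing A] [StarRing A] [CStarRing A] [NormedAlgebra ℂ A] [StarModule ℂ A]
  [AddCommGroup M] [Module ℂ M] [AddCommGroup N] [Module ℂ N]

/-- `Φ : M → N` is an isomorphism of left Hilbert `A`-modules: a bijective
`A`-linear additive map preserving the left `A`-valued inner products. -/
def IsLeftHilbertIso (S : CstarBimodule A M) (T : CstarBimodule A N) (Φ : M → N) : Prop :=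
  Function.Bijective Φ ∧ (∀ m n : M, Φ (m + n) = Φ m + Φ n) ∧
    (∀ a (m : M), Φ (S.lsmul a m) = T.lsmul a (Φ m)) ∧
    (∀ m n : M, T.innerL (Φ m) (Φ n) = S.innerL m n)

/-- An isomorphism of Hilbert C*-bimodules: additionally preserves the right
action and the right inner product. -/
def IsBimoduleIso (S : CstarBimodule A M) (T : CstarBimodule A N) (Φ : M → N) : Prop :=
  IsLeftHilbertIso S T Φ ∧ (∀ (m : M) a, Φ (S.rsmul m a) = T.rsmul (Φ m) a) ∧
    (∀ m n : M, T.innerR (Φ m) (Φ n) = S.innerR m n)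

/-- Proposition 1.4 (`lrip`): over a commutative C*-algebra,
`⟨m,n⟩_L • p = ⟨p,n⟩_L • m` for all `m, n, p`. -/
theorem innerL_smul_comm {A' M' : Type*} [NormedCommRing A'] [StarRing A'] [CStarRing A']
    [NormedAlgebra ℂ A'] [StarModule ℂ A'] [AddCommGroup M'] [Module ℂ M']
    (S : CstarBimodule A' M') :
    ∀ m n p : M', S.lsmul (S.innerL m n) p = S.lsmul (S.innerL p n) m := by
  intro m n p
  -- Key identity from commutativity of A'
  have key : ∀ x y z w r : M', S.rsmul x (S.innerR y z * S.innerR w r)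
      = S.rsmul z (S.innerR w x * S.innerR y r) := by
    intro x y z w r
    have h1 : S.lsmul (S.innerL x y * S.innerL z w) r
        = S.rsmul x (S.innerR y z * S.innerR w r) := by
      rw [S.mul_lsmul, S.compat z w r, ← S.lsmul_rsmul, S.compat x y z, ← S.rsmul_mul]
    have h2 : S.lsmul (S.innerL z w * S.innerL x y) r
        = S.rsmul z (S.innerR w x * S.innerR y r) := by
      rw [S.mul_lsmul, S.compat x y r, ← S.lsmul_rsmul, S.compat z w x, ← S.rsmul_mul]
    rw [← h1, ← h2, mul_comm]
  set u := S.innerR n p with hu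
  set v := S.innerR n m with hv
  set q := S.rsmul m u - S.rsmul p v with hq
  -- additive hom bundling for rsmul in the first variable
  have rsub : ∀ (x y : M') a, S.rsmul (x - y) a = S.rsmul x a - S.rsmul y a := by
    intro x y a
    exact map_sub (AddMonoidHom.mk' (fun z => S.rsmul z a) (fun z w => S.rsmul_add z w a)) x y
  -- additive hom bundling for innerR in the second variable
  have isub : ∀ (x y : M'), S.innerR q (x - y) = S.innerR q x - S.innerR q y := by
    intro x y
    exact map_sub (AddMonoidHom.mk' (fun z => S.innerR q z) (S.innerR_add_right q)) x y
  have izero : S.innerR q 0 = 0 :=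
    map_zero (AddMonoidHom.mk' (fun z => S.innerR q z) (S.innerR_add_right q))
  have hqu : S.rsmul q u = 0 := by
    rw [hq, rsub, ← S.rsmul_mul, ← S.rsmul_mul, hu, hv, key m n p n p, sub_self]
  have hqv : S.rsmul q v = 0 := by
    rw [hq, rsub, ← S.rsmul_mul, ← S.rsmul_mul, hu, hv, key m n p n m, sub_self]
  set b := S.innerR q q with hb
  have hbu : b * u = 0 := by rw [hb, ← S.innerR_rsmul_right, hqu, izero]
  have hbv : b * v = 0 := by rw [hb, ← S.innerR_rsmul_right, hqv, izero]
  have hbexp : b = S.innerR q m * u - S.innerR q p * v := by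
    rw [hb]
    conv_lhs => rw [hq]
    rw [isub, S.innerR_rsmul_right, S.innerR_rsmul_right]
  have hbb : b * b = 0 := by
    nth_rewrite 1 [hbexp]
    rw [sub_mul, mul_assoc, mul_assoc, mul_comm u b, mul_comm v b, hbu, hbv,
      mul_zero, mul_zero, sub_self]
  have hsb : star b = b := S.innerR_star q q
  have hnb : ‖b‖ * ‖b‖ = 0 := by
    rw [← CStarRing.norm_star_mul_self, hsb, hbb, norm_zero]
  have hb0 : b = 0 := by
    have := mul_self_eq_zero.mp hnb
    exact norm_eq_zero.mp this
  have hq0 : q = 0 := S.innerR_definite q hb0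
  have heq : S.rsmul m u = S.rsmul p v := sub_eq_zero.mp hq0
  rw [S.compat m n p, S.compat p n m]
  exact heq
end
end

section
/- Let A be a commutative C*-algebra and M a Hilbert C*-bimodule over A. Then for all m, p ∈ M, ⟨m,m⟩_L · p = ⟨p,m⟩_L · m. -/
noncomputable section

variable {A M N : Type*}
  [NormedRing A] [StarRing A] [CStarRing A] [NormedAlgebra ℂ A] [StarModule ℂ A]
  [AddCommGroup M] [Module ℂ M] [AddCommGroup N] [Module ℂ N]

section Aux

variable (S : CstarBimodule A M)

lemma CstarBimodule.innerL_zero_left (p : M) : S.innerL 0 p = 0 := by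
  have h := S.innerL_add_left 0 0 p
  rw [add_zero] at h
  exact (left_eq_add.mp h)

lemma CstarBimodule.innerL_sub_left (m n p : M) :
    S.innerL (m - n) p = S.innerL m p - S.innerL n p := by
  have h := S.innerL_add_left (m - n) n p
  rw [sub_add_cancel] at h
  exact eq_sub_of_add_eq h.symm

lemma CstarBimodule.innerR_zero_right (m : M) : S.innerR m 0 = 0 := by
  have h := S.innerR_add_right m 0 0
  rw [add_zero] at h
  exact (left_eq_add.mp h)

lemma CstarBimodule.innerR_sub_right (m n p : M) :
    S.innerR m (n - p) = S.innerR m n - S.innerR m p := by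
  have h := S.innerR_add_right m (n - p) p
  rw [sub_add_cancel] at h
  exact eq_sub_of_add_eq h.symm

lemma CstarBimodule.rsmul_zero (m : M) : S.rsmul m 0 = 0 := by
  have h := S.add_rsmul m 0 0
  rw [add_zero] at h
  exact (left_eq_add.mp h)

end Aux

/-- The special case `m = n` of Proposition 1.4 (`lrip`): over a commutative
C*-algebra, `⟨m,m⟩_L • p = ⟨p,m⟩_L • m` for all `m, p`. -/
theorem innerL_self_smul_comm {A' M' : Type*} [NormedCommRing A'] [StarRing A'] [CStarRing A']
    [NormedAlgebra ℂ A'] [StarModule ℂ A'] [AddCommGroup M'] [Module ℂ M']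
    (S : CstarBimodule A' M') :
    ∀ m p : M', S.lsmul (S.innerL m m) p = S.lsmul (S.innerL p m) m := by
  intro m p
  set a := S.innerL m m with ha
  set b := S.innerL p m with hb
  set X := S.lsmul a p - S.lsmul b m with hX
  -- ⟨X, m⟩_L = 0
  have hXm : S.innerL X m = 0 := by
    rw [hX, S.innerL_sub_left, S.innerL_lsmul_left, S.innerL_lsmul_left, ← ha, ← hb,
      mul_comm, sub_self]
  -- ⟨m, X⟩_R = 0
  have hmX : S.innerR m X = 0 := by
    have h1 : S.innerR m (S.lsmul a p) = S.innerR m m * S.innerR m p := by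
      rw [ha, S.compat, S.innerR_rsmul_right]
    have h2 : S.innerR m (S.lsmul b m) = S.innerR m p * S.innerR m m := by
      rw [hb, S.compat, S.innerR_rsmul_right]
    rw [hX, S.innerR_sub_right, h1, h2, mul_comm, sub_self]
  -- a • X = 0
  have haX : S.lsmul a X = 0 := by
    rw [ha, S.compat, hmX, S.rsmul_zero]
  -- g := ⟨X, X⟩_L
  set g := S.innerL X X with hg
  have hag : a * g = 0 := by
    rw [hg, ← S.innerL_lsmul_left, haX, S.innerL_zero_left]
  have hgform : g = a * S.innerL p X := by
    have hmX' : S.innerL m X = 0 := by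
      rw [← S.innerL_star, hXm, star_zero]
    rw [hg]
    conv_lhs => rw [hX]
    rw [S.innerL_sub_left, S.innerL_lsmul_left, S.innerL_lsmul_left, hmX', mul_zero, sub_zero]
  have hgsq : g * g = 0 := by
    calc g * g = S.innerL p X * (a * g) := by rw [hgform]; ring
    _ = 0 := by rw [hag, mul_zero]
  have hgstar : star g = g := by rw [hg, S.innerL_star]
  have hgnorm : ‖g‖ * ‖g‖ = 0 := by
    rw [← CStarRing.norm_star_mul_self, hgstar, hgsq, norm_zero]
  have hg0 : g = 0 := by
    rw [← norm_eq_zero]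
    exact mul_self_eq_zero.mp hgnorm
  have hX0 : X = 0 := S.innerL_definite X (hg ▸ hg0)
  exact sub_eq_zero.mp (hX ▸ hX0)
end
end

section
/- Let A = C(X) for a compact Hausdorff space X and let p, q ∈ M_n(A) be projections of pointwise rank ≤ 1, endowing A^n p and A^n q with their symmetric Hilbert C*-bimodule structures (right inner product via the trace τ). Then A^n p and A^n q are isomorphic as Hilbert C*-bimodules if and only if p and q are Murray–von Neumann equivalent in M_n(A). -/
/-! An additive, `A`-linear map `Φ : A^n p → A^n q` is right multiplication by the matrix `W`
whose rows are the images of the rows of `p`. If `Φ` preserves the left inner product then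
`W Wᴴ = p`; if moreover `Φ` is onto, every row of `q` is `r W` with `r = r p`, so `q Wᴴ W = q`,
and taking adjoints (using `W q = W`) gives `Wᴴ W = q`. Conversely, if `p = vᴴ v` and `q = v vᴴ`,
then `m ↦ m vᴴ` is inverse to `r ↦ r v`, and it preserves both inner products because these
only see `vᴴ v = p`. -/

noncomputable section

open Matrix

/-- The row space `A^n p = {m | m ⬝ p = m}`, as a `ℂ`-submodule of `Fin n → A`. -/
def rowMod {A : Type*} [NormedCommRing A] [NormedAlgebra ℂ A]
    {n : ℕ} (p : Matrix (Fin n) (Fin n) A) :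
    Submodule ℂ (Fin n → A) where
  carrier := {m | m ᵥ* p = m}
  add_mem' := by
    intro m r hm hr
    simp only [Set.mem_setOf_eq] at *
    rw [Matrix.add_vecMul, hm, hr]
  zero_mem' := by simp [Set.mem_setOf_eq]
  smul_mem' := by
    intro c m hm
    simp only [Set.mem_setOf_eq] at *
    rw [Matrix.smul_vecMul, hm]

namespace Matrix

variable {R ι κ : Type*} [CommSemiring R] [StarRing R] [Fintype κ]

theorem mul_conjTranspose_apply_eq_dotProduct (M : Matrix ι κ R) (k l : ι) :
    (M * Mᴴ) k l = M k ⬝ᵥ star (M l) :=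
  rfl

theorem vecMul_dotProduct_star_vecMul [Fintype ι] (w : Matrix ι κ R) (m r : ι → R) :
    m ᵥ* w ⬝ᵥ star (r ᵥ* w) = m ᵥ* (w * wᴴ) ⬝ᵥ star r := by
  rw [star_vecMul, dotProduct_mulVec, vecMul_vecMul]

theorem star_vecMul_dotProduct_vecMul [Fintype ι] (w : Matrix ι κ R) (m r : ι → R) :
    star (m ᵥ* w) ⬝ᵥ r ᵥ* w = star m ⬝ᵥ r ᵥ* (w * wᴴ) := by
  rw [dotProduct_comm, vecMul_dotProduct_star_vecMul, dotProduct_comm]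

end Matrix

namespace rowMod

variable {A : Type*} [NormedCommRing A] [NormedAlgebra ℂ A] {n : ℕ}
  {p q : Matrix (Fin n) (Fin n) A}

theorem mem_iff {m : Fin n → A} : m ∈ rowMod p ↔ m ᵥ* p = m :=
  Iff.rfl

theorem smul_mem (a : A) {m : Fin n → A} (hm : m ∈ rowMod p) : a • m ∈ rowMod p := by
  rw [mem_iff, smul_vecMul, mem_iff.mp hm]

theorem row_mem (hp : p * p = p) (k : Fin n) : p k ∈ rowMod p := by
  rw [mem_iff, ← mul_apply_eq_vecMul, hp]

theorem vecMul_mem_mul_swap (a b : Matrix (Fin n) (Fin n) A) {m : Fin n → A}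
    (hm : m ∈ rowMod (a * b)) : m ᵥ* a ∈ rowMod (b * a) := by
  rw [mem_iff, vecMul_vecMul, ← Matrix.mul_assoc, ← vecMul_vecMul, mem_iff.mp hm]

def mulSwapEquiv (a b : Matrix (Fin n) (Fin n) A) : rowMod (a * b) ≃ₗ[ℂ] rowMod (b * a) where
  toFun m := ⟨m ᵥ* a, vecMul_mem_mul_swap a b m.2⟩
  invFun r := ⟨r ᵥ* b, vecMul_mem_mul_swap b a r.2⟩
  map_add' m r := Subtype.ext (add_vecMul a (m : Fin n → A) r)
  map_smul' c m := Subtype.ext (smul_vecMul c (m : Fin n → A) a)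
  left_inv m := Subtype.ext <| by simp only [vecMul_vecMul, mem_iff.mp m.2]
  right_inv r := Subtype.ext <| by simp only [vecMul_vecMul, mem_iff.mp r.2]

theorem coe_mulSwapEquiv_apply (a b : Matrix (Fin n) (Fin n) A) (m : rowMod (a * b)) :
    (mulSwapEquiv a b m : Fin n → A) = m ᵥ* a :=
  rfl

theorem coe_apply_eq_vecMul (hp : p * p = p) (Φ : rowMod p → rowMod q)
    (hadd : ∀ m r, Φ (m + r) = Φ m + Φ r)
    (hsmul : ∀ (a : A) (m m' : rowMod p), (m' : Fin n → A) = a • m → (Φ m' : Fin n → A) = a • Φ m)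
    (m : rowMod p) :
    (Φ m : Fin n → A) = m ᵥ* of fun k => (Φ ⟨p k, row_mem hp k⟩ : Fin n → A) := by
  let f : rowMod p →+ Fin n → A :=
    (rowMod q).subtype.toAddMonoidHom.comp (AddMonoidHom.mk' Φ hadd)
  have hm : m = ∑ k, (⟨(m : Fin n → A) k • p k, smul_mem _ (row_mem hp k)⟩ : rowMod p) := by
    apply Subtype.ext
    simp only [Submodule.coe_sum, ← vecMul_eq_sum, mem_iff.mp m.2]
  calc (Φ m : Fin n → A) = f (∑ k, ⟨(m : Fin n → A) k • p k, _⟩) := by rw [← hm]; rfl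
    _ = ∑ k, (m : Fin n → A) k • (Φ ⟨p k, row_mem hp k⟩ : Fin n → A) := by
      rw [map_sum]
      exact Finset.sum_congr rfl fun k _ => hsmul _ _ _ rfl
    _ = _ := (vecMul_eq_sum _ _).symm

theorem coe_mulSwapEquiv_eq_smul (a b : Matrix (Fin n) (Fin n) A) (c : A)
    {m m' : rowMod (a * b)} (h : (m' : Fin n → A) = c • m) :
    (mulSwapEquiv a b m' : Fin n → A) = c • mulSwapEquiv a b m := by
  rw [coe_mulSwapEquiv_apply, coe_mulSwapEquiv_apply, h, smul_vecMul]

section Star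

variable [StarRing A]

theorem dotProduct_star_mulSwapEquiv (v : Matrix (Fin n) (Fin n) A) (m r : rowMod (star v * v)) :
    (mulSwapEquiv (star v) v m : Fin n → A) ⬝ᵥ star (mulSwapEquiv (star v) v r : Fin n → A) =
      m ⬝ᵥ star (r : Fin n → A) := by
  rw [coe_mulSwapEquiv_apply, coe_mulSwapEquiv_apply, vecMul_dotProduct_star_vecMul,
    ← star_eq_conjTranspose, star_star, mem_iff.mp m.2]

theorem star_dotProduct_mulSwapEquiv (v : Matrix (Fin n) (Fin n) A) (m r : rowMod (star v * v)) :
    star (mulSwapEquiv (star v) v m : Fin n → A) ⬝ᵥ (mulSwapEquiv (star v) v r : Fin n → A) =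
      star (m : Fin n → A) ⬝ᵥ r := by
  rw [coe_mulSwapEquiv_apply, coe_mulSwapEquiv_apply, star_vecMul_dotProduct_vecMul,
    ← star_eq_conjTranspose, star_star, mem_iff.mp r.2]

theorem exists_murrayVonNeumann_of_surjective
    (hp : p * p = p) (hpsa : star p = p) (hq : q * q = q) (hqsa : star q = q)
    (Φ : rowMod p → rowMod q) (hΦ : Function.Surjective Φ)
    (hadd : ∀ m r, Φ (m + r) = Φ m + Φ r)
    (hsmul : ∀ (a : A) (m m' : rowMod p), (m' : Fin n → A) = a • m → (Φ m' : Fin n → A) = a • Φ m)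
    (hL : ∀ m r : rowMod p,
      (Φ m : Fin n → A) ⬝ᵥ star (Φ r : Fin n → A) = m ⬝ᵥ star (r : Fin n → A)) :
    ∃ v : Matrix (Fin n) (Fin n) A, star v * v = p ∧ v * star v = q := by
  set W : Matrix (Fin n) (Fin n) A := of fun k => (Φ ⟨p k, row_mem hp k⟩ : Fin n → A)
  have hWq : W * q = W := funext fun k => (Φ ⟨p k, row_mem hp k⟩).2
  have hWW : W * Wᴴ = p := by
    ext k l
    calc (W * Wᴴ) k l = W k ⬝ᵥ star (W l) := mul_conjTranspose_apply_eq_dotProduct W k l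
      _ = p k ⬝ᵥ star (p l) := hL _ _
      _ = (p * pᴴ) k l := (mul_conjTranspose_apply_eq_dotProduct p k l).symm
      _ = p k l := by rw [← star_eq_conjTranspose, hpsa, hp]
  have hqWW : q * (Wᴴ * W) = q := by
    funext i
    obtain ⟨r, hr⟩ := hΦ ⟨q i, row_mem hq i⟩
    have hqi : q i = r ᵥ* W := by rw [← coe_apply_eq_vecMul hp Φ hadd hsmul, hr]
    rw [mul_apply_eq_vecMul, hqi, vecMul_vecMul, ← Matrix.mul_assoc, hWW, ← vecMul_vecMul,
      mem_iff.mp r.2]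
  refine ⟨Wᴴ, by rw [star_eq_conjTranspose, conjTranspose_conjTranspose, hWW], ?_⟩
  calc Wᴴ * star Wᴴ = Wᴴ * (W * q) := by
        rw [star_eq_conjTranspose, conjTranspose_conjTranspose, hWq]
    _ = (q * (Wᴴ * W))ᴴ := by
      rw [conjTranspose_mul, conjTranspose_mul, conjTranspose_conjTranspose,
        ← star_eq_conjTranspose q, hqsa, Matrix.mul_assoc]
    _ = q := by rw [hqWW, ← star_eq_conjTranspose, hqsa]

end Star

end rowMod

theorem rowMod_iso_iff_murrayVonNeumann_general
    {X : Type*} [TopologicalSpace X] [CompactSpace X]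
    {n : ℕ} (p q : Matrix (Fin n) (Fin n) C(X, ℂ))
    (hp : p * p = p) (hpsa : star p = p) (hq : q * q = q) (hqsa : star q = q) :
    (∃ Φ : rowMod p → rowMod q,
      Function.Bijective Φ ∧
      (∀ m r : rowMod p, Φ (m + r) = Φ m + Φ r) ∧
      (∀ (c : ℂ) (m : rowMod p), Φ (c • m) = c • Φ m) ∧
      (∀ (a : C(X, ℂ)) (m m' : rowMod p),
        ((m' : Fin n → C(X, ℂ)) = fun i => a * (m : Fin n → C(X, ℂ)) i) →
        ((Φ m' : Fin n → C(X, ℂ)) = fun i => a * (Φ m : Fin n → C(X, ℂ)) i)) ∧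
      (∀ m r : rowMod p,
        (∑ i, (Φ m : Fin n → C(X, ℂ)) i * star ((Φ r : Fin n → C(X, ℂ)) i)) =
          ∑ i, (m : Fin n → C(X, ℂ)) i * star ((r : Fin n → C(X, ℂ)) i)) ∧
      (∀ m r : rowMod p,
        (∑ i, star ((Φ m : Fin n → C(X, ℂ)) i) * (Φ r : Fin n → C(X, ℂ)) i) =
          ∑ i, star ((m : Fin n → C(X, ℂ)) i) * (r : Fin n → C(X, ℂ)) i)) ↔
    ∃ v : Matrix (Fin n) (Fin n) C(X, ℂ), star v * v = p ∧ v * star v = q := by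
  constructor
  · rintro ⟨Φ, hΦ, hadd, -, hsmul, hL, -⟩
    exact rowMod.exists_murrayVonNeumann_of_surjective hp hpsa hq hqsa Φ hΦ.2 hadd hsmul hL
  · rintro ⟨v, rfl, rfl⟩
    let e := rowMod.mulSwapEquiv (star v) v
    exact ⟨e, e.bijective, map_add e, map_smul e,
      fun a _ _ h => rowMod.coe_mulSwapEquiv_eq_smul _ _ a h,
      rowMod.dotProduct_star_mulSwapEquiv v, rowMod.star_dotProduct_mulSwapEquiv v⟩

/-- Example 1.8 (`proj`), conclusion: for `A = C(X)` (`X` compact Hausdorff)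
and projections `p, q ∈ M_n(A)` of pointwise rank `≤ 1`, the symmetric Hilbert
C*-bimodules `A^n p` and `A^n q` (pointwise actions on both sides,
`⟨m,r⟩_L = Σ mᵢ (rᵢ)*`, `⟨m,r⟩_R = τ(m* r)`) are isomorphic as Hilbert
C*-bimodules if and only if `p` and `q` are Murray–von Neumann equivalent. -/
theorem rowMod_iso_iff_murrayVonNeumann
    {X : Type*} [TopologicalSpace X] [CompactSpace X] [T2Space X]
    {n : ℕ} (p q : Matrix (Fin n) (Fin n) C(X, ℂ))
    (hp : p * p = p) (hpsa : star p = p) (hq : q * q = q) (hqsa : star q = q)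
    (hrankp : ∀ x : X, (p.map (fun f => f x)).rank ≤ 1)
    (hrankq : ∀ x : X, (q.map (fun f => f x)).rank ≤ 1) :
    (∃ Φ : rowMod p → rowMod q,
      Function.Bijective Φ ∧
      (∀ m r : rowMod p, Φ (m + r) = Φ m + Φ r) ∧
      (∀ (c : ℂ) (m : rowMod p), Φ (c • m) = c • Φ m) ∧
      (∀ (a : C(X, ℂ)) (m m' : rowMod p),
        ((m' : Fin n → C(X, ℂ)) = fun i => a * (m : Fin n → C(X, ℂ)) i) →
        ((Φ m' : Fin n → C(X, ℂ)) = fun i => a * (Φ m : Fin n → C(X, ℂ)) i)) ∧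
      (∀ m r : rowMod p,
        (∑ i, (Φ m : Fin n → C(X, ℂ)) i * star ((Φ r : Fin n → C(X, ℂ)) i)) =
          ∑ i, (m : Fin n → C(X, ℂ)) i * star ((r : Fin n → C(X, ℂ)) i)) ∧
      (∀ m r : rowMod p,
        (∑ i, star ((Φ m : Fin n → C(X, ℂ)) i) * (Φ r : Fin n → C(X, ℂ)) i) =
          ∑ i, star ((m : Fin n → C(X, ℂ)) i) * (r : Fin n → C(X, ℂ)) i)) ↔
    ∃ v : Matrix (Fin n) (Fin n) C(X, ℂ), star v * v = p ∧ v * star v = q :=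
  rowMod_iso_iff_murrayVonNeumann_general p q hp hpsa hq hqsa
end
end

section
/- Let A = C(X) with X compact Hausdorff, and p ∈ M_n(A) a projection of pointwise rank ≤ 1. The symmetric Hilbert C*-bimodule A^n p is full as a right module (i.e., the span of ⟨A^n p, A^n p⟩_R is dense in A) if and only if rank p(x) = 1 for all x ∈ X. In particular, the identity of K(A^n p) is τ(p), the characteristic function of {x ∈ X : rank p(x) = 1}. -/
/-
Pointwise, `p(x)` is an idempotent matrix of rank `0` or `1`, and the trace of an idempotent
matrix is its rank, so `τ(p)(x) = rank p(x) ∈ {0, 1}`. If `p(x) = 0`, every `m ∈ A^n p`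
vanishes at `x`, so all inner products lie in the closed ideal of functions vanishing at `x`
and the module is not full. Conversely, for self-adjoint idempotent `p` the rows of `p` lie in
`A^n p` and `∑ₖ ⟨pₖ, pₖ⟩_R = τ(p * p) = τ(p)`, so if `τ(p) = 1` the inner products span `A`.
-/

open Matrix

namespace Matrix

variable {K m n : Type*} [Field K] [Fintype n]

theorem rank_eq_zero_iff {q : Matrix m n K} : q.rank = 0 ↔ q = 0 := by
  classical
  rw [rank, Submodule.finrank_eq_zero, LinearMap.range_eq_bot, ← toLin'_apply',
    LinearEquiv.map_eq_zero_iff]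

theorem trace_eq_rank_of_isIdempotentElem [DecidableEq n] {q : Matrix n n K}
    (hq : IsIdempotentElem q) : q.trace = q.rank := by
  have he : IsIdempotentElem (toLin' q) := hq.map toLinAlgEquiv'
  rw [← trace_toLin'_eq, rank, ← toLin'_apply',
    (LinearMap.IsIdempotentElem.isProj_range _ he).trace]

end Matrix

section RowModule

variable {ι A : Type*} [Fintype ι] [CommRing A]

theorem map_eq_zero_of_vecMul_eq_self {B : Type*} [Semiring B] (φ : A →+* B)
    {p : Matrix ι ι A} (hφ : p.map φ = 0) {m : ι → A} (hm : m ᵥ* p = m) (i : ι) : φ (m i) = 0 := by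
  rw [← hm, RingHom.map_vecMul, hφ, vecMul_zero, Pi.zero_apply]

variable [StarRing A]

def rightInnerProducts (p : Matrix ι ι A) : Set A :=
  {a | ∃ m r : ι → A, m ᵥ* p = m ∧ r ᵥ* p = r ∧ a = ∑ i, star (m i) * r i}

variable {p : Matrix ι ι A}

theorem mul_trace_mem_span_rightInnerProducts {R : Type*} [Semiring R] [Module R A]
    (hp : IsIdempotentElem p) (hpsa : IsSelfAdjoint p) (a : A) :
    a * p.trace ∈ Submodule.span R (rightInnerProducts p) := by
  have hrow : ∀ k, p k ᵥ* p = p k := fun k => by rw [← mul_apply_eq_vecMul, hp.eq]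
  have hstar : ∀ k i, star (p k i) = p i k := fun k i => by
    simpa using congr_fun₂ hpsa.star_eq i k
  have htrace : a * p.trace = ∑ k, ∑ i, star (p k i) * (a • p k) i := by
    conv_lhs => rw [← hp.eq]
    simp only [trace, diag, mul_apply, Finset.mul_sum, hstar, Pi.smul_apply, smul_eq_mul]
    rw [Finset.sum_comm]
    exact Finset.sum_congr rfl fun _ _ => Finset.sum_congr rfl fun _ _ => by ring
  rw [htrace]
  exact Submodule.sum_mem _ fun k _ => Submodule.subset_span
    ⟨p k, a • p k, hrow k, by rw [smul_vecMul, hrow], rfl⟩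

theorem span_rightInnerProducts_eq_top {R : Type*} [Semiring R] [Module R A]
    (hp : IsIdempotentElem p) (hpsa : IsSelfAdjoint p) (htr : p.trace = 1) :
    Submodule.span R (rightInnerProducts p) = ⊤ :=
  Submodule.eq_top_iff'.2 fun a => by
    simpa [htr] using mul_trace_mem_span_rightInnerProducts (R := R) hp hpsa a

theorem map_eq_zero_of_mem_rightInnerProducts {B : Type*} [Semiring B] (φ : A →+* B)
    (hφ : p.map φ = 0) {a : A} (ha : a ∈ rightInnerProducts p) : φ a = 0 := by
  obtain ⟨m, r, -, hr, rfl⟩ := ha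
  simp [map_sum, map_eq_zero_of_vecMul_eq_self φ hφ hr]

end RowModule

section Pointwise

variable {X 𝕜 ι : Type*} [TopologicalSpace X] [Fintype ι] [Field 𝕜] [TopologicalSpace 𝕜]
  [IsTopologicalRing 𝕜] {p : Matrix ι ι C(X, 𝕜)}

theorem trace_apply_eq_ite_of_rank_le_one [DecidableEq ι] (hp : IsIdempotentElem p)
    (hrank : ∀ x : X, (p.map (fun f => f x)).rank ≤ 1) (x : X) :
    p.trace x = if (p.map (fun f => f x)).rank = 1 then 1 else 0 := by
  have hx : IsIdempotentElem (p.map fun f => f x) :=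
    hp.map (ContinuousMap.evalAlgHom 𝕜 𝕜 x : C(X, 𝕜) →+* 𝕜).mapMatrix
  have htr : p.trace x = (p.map fun f => f x).trace := by simp [trace]
  rw [htr, trace_eq_rank_of_isIdempotentElem hx]
  rcases (hrank x).lt_or_eq with h | h
  · simp [Nat.lt_one_iff.1 h]
  · simp [h]

theorem closure_span_rightInnerProducts_ne_univ [StarRing 𝕜] [ContinuousStar 𝕜] [T1Space 𝕜]
    {x : X} (hx : p.map (fun f => f x) = 0) :
    closure (Submodule.span 𝕜 (rightInnerProducts p) : Set C(X, 𝕜)) ≠ Set.univ := by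
  intro hfull
  have hspan : Submodule.span 𝕜 (rightInnerProducts p) ≤
      LinearMap.ker (ContinuousMap.evalCLM 𝕜 x : C(X, 𝕜) →L[𝕜] 𝕜).toLinearMap :=
    Submodule.span_le.2 fun _ ha =>
      map_eq_zero_of_mem_rightInnerProducts (ContinuousMap.evalAlgHom 𝕜 𝕜 x : C(X, 𝕜) →+* 𝕜) hx ha
  have hone : (1 : C(X, 𝕜)) ∈ closure (Submodule.span 𝕜 (rightInnerProducts p) : Set C(X, 𝕜)) :=
    hfull ▸ Set.mem_univ _
  exact one_ne_zero (α := 𝕜)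
    (closure_minimal hspan (ContinuousLinearMap.isClosed_ker _) hone)

end Pointwise

theorem rowMod_full_iff_rank_eq_one_general
    {X : Type*} [TopologicalSpace X]
    {n : ℕ} (p : Matrix (Fin n) (Fin n) C(X, ℂ))
    (hp : p * p = p) (hpsa : star p = p)
    (hrank : ∀ x : X, (p.map (fun f => f x)).rank ≤ 1) :
    ((closure (Submodule.span ℂ
        {a : C(X, ℂ) | ∃ m r : Fin n → C(X, ℂ), m ᵥ* p = m ∧ r ᵥ* p = r ∧
          a = ∑ i, star (m i) * r i} : Set C(X, ℂ)) = Set.univ) ↔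
      ∀ x : X, (p.map (fun f => f x)).rank = 1) ∧
    (∀ m : Fin n → C(X, ℂ), m ᵥ* p = m → ∀ i, m i * (∑ j, p j j) = m i) ∧
    (∀ x : X, (∑ j, p j j) x = if (p.map (fun f => f x)).rank = 1 then 1 else 0) := by
  have htrace := trace_apply_eq_ite_of_rank_le_one hp hrank
  have hvanish : ∀ x, (p.map fun f => f x).rank ≠ 1 → p.map (fun f => f x) = 0 :=
    fun x h => rank_eq_zero_iff.1 (by have := hrank x; omega)
  refine ⟨⟨fun hfull x => ?_, fun hone => ?_⟩, fun m hm i => ?_, htrace⟩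
  · by_contra h
    exact closure_span_rightInnerProducts_ne_univ (hvanish x h) hfull
  · have htr : p.trace = 1 := ContinuousMap.ext fun x => by simp [htrace, hone x]
    change closure (Submodule.span ℂ (rightInnerProducts p) : Set C(X, ℂ)) = _
    rw [span_rightInnerProducts_eq_top hp hpsa htr, Submodule.top_coe, closure_univ]
  · ext x
    change m i x * p.trace x = m i x
    by_cases h : (p.map fun f => f x).rank = 1
    · rw [htrace, if_pos h, mul_one]
    · have hmx : m i x = 0 := map_eq_zero_of_vecMul_eq_self
        (ContinuousMap.evalAlgHom ℂ ℂ x : C(X, ℂ) →+* ℂ) (hvanish x h) hm i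
      rw [hmx, zero_mul]

/-- Example 1.8 (`proj`), fullness: for `A = C(X)` (`X` compact Hausdorff) and
a projection `p ∈ M_n(A)` of pointwise rank `≤ 1`, the symmetric Hilbert
C*-bimodule `A^n p` (right inner product `⟨m,r⟩_R = τ(m* r)`) is full as a
right module iff `rank p(x) = 1` for all `x`.  Moreover the identity `τ(p)` of
`K(A^n p)` acts as the identity on `A^n p` and is the characteristic function
of `{x | rank p(x) = 1}`. -/
theorem rowMod_full_iff_rank_eq_one
    {X : Type*} [TopologicalSpace X] [CompactSpace X] [T2Space X]
    {n : ℕ} (p : Matrix (Fin n) (Fin n) C(X, ℂ))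
    (hp : p * p = p) (hpsa : star p = p)
    (hrank : ∀ x : X, (p.map (fun f => f x)).rank ≤ 1) :
    ((closure (Submodule.span ℂ
        {a : C(X, ℂ) | ∃ m r : Fin n → C(X, ℂ), m ᵥ* p = m ∧ r ᵥ* p = r ∧
          a = ∑ i, star (m i) * r i} : Set C(X, ℂ)) = Set.univ) ↔
      ∀ x : X, (p.map (fun f => f x)).rank = 1) ∧
    (∀ m : Fin n → C(X, ℂ), m ᵥ* p = m → ∀ i, m i * (∑ j, p j j) = m i) ∧
    (∀ x : X, (∑ j, p j j) x = if (p.map (fun f => f x)).rank = 1 then 1 else 0) :=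
  rowMod_full_iff_rank_eq_one_general p hp hpsa hrank
end
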